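/- arXiv:2503.16080 — 8 statements merged into one kernel-verified Lean document; each statement's English description precedes it below -/
import Mathlib

section
/- Let N ≥ 1 be a power of two, R = ℤ[X]/(X^N + 1), and for 0 ≤ t < N let σ_t : R → R be the ring homomorphism determined by X ↦ X^{2t+1}. The image of X in R is a unit with X^{−1} = −X^{N−1}. Then for every m ∈ R (with power-basis coordinates m_0, …, m_{N−1} ∈ ℤ) and every 0 ≤ j < N, one has Σ_{t=0}^{N−1} σ_t(X^{−j}·m) = N·m_j in R. Equivalently, Σ_{t=0}^{N−1} X^{−j(2t+1)}·m(X^{2t+1}) = N·m_j. -/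
open Polynomial Finset

/-- `Rq N` is the ring `ℤ[X]/(X^N + 1)`. -/
abbrev Rq (N : ℕ) : Type := AdjoinRoot ((X : ℤ[X]) ^ N + 1)

/-- The image of the indeterminate `X` in `ℤ[X]/(X^N + 1)`. -/
noncomputable def rx (N : ℕ) : Rq N := AdjoinRoot.root _

lemma geom_block {R : Type*} [CommRing R] (w : R) (M q : ℕ) :
    ∑ t ∈ Finset.range (M * q), w ^ t
      = (∑ s ∈ Finset.range M, w ^ s) * ∑ b ∈ Finset.range q, (w ^ M) ^ b := by
  induction q with
  | zero => simp
  | succ q ih =>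
    rw [Nat.mul_succ, Finset.sum_range_add, ih, Finset.sum_range_succ]
    simp only [pow_add, pow_mul, ← Finset.mul_sum]
    ring

lemma sum_zero {R : Type*} [CommRing R] (w : R) (M q : ℕ) (hw : w ^ M = -1)
    (hq : Even q) : ∑ t ∈ Finset.range (M * q), w ^ t = 0 := by
  rw [geom_block, hw, neg_one_geom_sum, if_pos hq, mul_zero]

/-- For `N` a power of two and `σ t : R → R` the ring homomorphism `X ↦ X^(2t+1)`
(for `0 ≤ t < N`): the image of `X` in `R = ℤ[X]/(X^N+1)` is a unit with inverse
`-X^(N-1)`, and for every `m ∈ R` with power-basis coordinates `c` and every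
`0 ≤ j < N`, one has `∑_{t=0}^{N-1} σ_t(X^{-j}·m) = N · m_j`. -/
theorem stmt2 (N : ℕ) (hN1 : 1 ≤ N) (hN : ∃ κ : ℕ, N = 2 ^ κ)
    (σ : ℕ → (Rq N →+* Rq N))
    (hσ : ∀ t < N, σ t (rx N) = rx N ^ (2 * t + 1)) :
    rx N * (-(rx N ^ (N - 1))) = 1 ∧
    ∀ (m : Rq N) (c : ℕ → ℤ),
      m = (∑ i ∈ Finset.range N, c i • rx N ^ i) →
      ∀ j < N,
        ∑ t ∈ Finset.range N, σ t ((-(rx N ^ (N - 1))) ^ j * m)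
          = ((N : ℤ) * c j) • (1 : Rq N) := by
  obtain ⟨κ, hκ⟩ := hN
  have hroot : rx N ^ N = -1 := by
    have h0 : (AdjoinRoot.mk ((X : ℤ[X]) ^ N + 1)) ((X : ℤ[X]) ^ N + 1) = 0 :=
      AdjoinRoot.mk_self
    rw [map_add, map_pow, AdjoinRoot.mk_X, map_one] at h0
    exact eq_neg_of_add_eq_zero_left h0
  have h1 : rx N * (-(rx N ^ (N - 1))) = 1 := by
    have hx : rx N * rx N ^ (N - 1) = rx N ^ N := by
      rw [← pow_succ']
      congr 1
      omega
    rw [mul_neg, hx, hroot, neg_neg]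
  refine ⟨h1, ?_⟩
  intro m c hm j hj
  set ξ : (Rq N)ˣ := ⟨rx N, -(rx N ^ (N - 1)), h1, by rw [mul_comm]; exact h1⟩ with hξdef
  have hxv : ((ξ : (Rq N)ˣ) : Rq N) = rx N := rfl
  have hinv : ((ξ⁻¹ : (Rq N)ˣ) : Rq N) = -(rx N ^ (N - 1)) := rfl
  have hξN : ξ ^ N = -1 := by
    ext
    rw [Units.val_pow_eq_pow_val, hxv, hroot]
    simp
  -- σ acts on integer powers of ξ
  have hσz : ∀ t < N, ∀ z : ℤ, σ t ((ξ ^ z : (Rq N)ˣ) : Rq N)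
      = ((ξ ^ ((2 * (t : ℤ) + 1) * z) : (Rq N)ˣ) : Rq N) := by
    intro t ht z
    have hφξ : Units.map ((σ t) : Rq N →* Rq N) ξ = ξ ^ (2 * (t : ℤ) + 1) := by
      have h2 : (2 * (t : ℤ) + 1) = ((2 * t + 1 : ℕ) : ℤ) := by push_cast; ring
      ext
      rw [Units.coe_map, h2, zpow_natCast, Units.val_pow_eq_pow_val, hxv]
      exact hσ t ht
    calc σ t ((ξ ^ z : (Rq N)ˣ) : Rq N)
        = ((Units.map ((σ t) : Rq N →* Rq N) (ξ ^ z) : (Rq N)ˣ) : Rq N) := by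
          rw [Units.coe_map]; rfl
      _ = ((ξ ^ ((2 * (t : ℤ) + 1) * z) : (Rq N)ˣ) : Rq N) := by
          rw [map_zpow, hφξ, ← zpow_mul]
  -- rewrite each term of the sum
  have hterm : ∀ t ∈ Finset.range N, σ t ((-(rx N ^ (N - 1))) ^ j * m)
      = ∑ i ∈ Finset.range N,
          c i • ((ξ ^ ((2 * (t : ℤ) + 1) * ((i : ℤ) - j)) : (Rq N)ˣ) : Rq N) := by
    intro t ht
    rw [Finset.mem_range] at ht
    rw [hm, Finset.mul_sum, map_sum]
    refine Finset.sum_congr rfl fun i _ => ?_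
    have hu : (ξ⁻¹ : (Rq N)ˣ) ^ j * ξ ^ i = ξ ^ ((i : ℤ) - (j : ℤ)) := by
      group
    have e1 : (-(rx N ^ (N - 1))) ^ j * (c i • rx N ^ i)
        = c i • ((ξ ^ ((i : ℤ) - (j : ℤ)) : (Rq N)ˣ) : Rq N) := by
      rw [mul_smul_comm, ← hu]
      congr 1
    rw [e1, map_zsmul, hσz t ht]
  rw [Finset.sum_congr rfl hterm, Finset.sum_comm]
  -- split each power
  have hsplit : ∀ (e : ℤ) (t : ℕ),
      ((ξ ^ ((2 * (t : ℤ) + 1) * e) : (Rq N)ˣ) : Rq N)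
      = ((ξ ^ e : (Rq N)ˣ) : Rq N) * (((ξ ^ (2 * e) : (Rq N)ˣ) : Rq N)) ^ t := by
    intro e t
    rw [← Units.val_pow_eq_pow_val, ← Units.val_mul]
    congr 1
    rw [← zpow_natCast (ξ ^ (2 * e)) t, ← zpow_mul, ← zpow_add]
    congr 1
    ring
  have hrw : ∀ i ∈ Finset.range N,
      (∑ t ∈ Finset.range N,
        c i • ((ξ ^ ((2 * (t : ℤ) + 1) * ((i : ℤ) - j)) : (Rq N)ˣ) : Rq N))
      = c i • (((ξ ^ ((i : ℤ) - j) : (Rq N)ˣ) : Rq N)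
          * ∑ t ∈ Finset.range N, (((ξ ^ (2 * ((i : ℤ) - j)) : (Rq N)ˣ) : Rq N)) ^ t) := by
    intro i _
    rw [← Finset.smul_sum, Finset.mul_sum]
    congr 1
    exact Finset.sum_congr rfl fun t _ => hsplit _ t
  rw [Finset.sum_congr rfl hrw]
  -- the key vanishing lemma
  have hzero : ∀ e : ℤ, e ≠ 0 → e.natAbs < N →
      ∑ t ∈ Finset.range N, (((ξ ^ (2 * e) : (Rq N)ˣ) : Rq N)) ^ t = 0 := by
    intro e he hlt
    set k := e.natAbs with hk
    have hk0 : k ≠ 0 := Int.natAbs_ne_zero.mpr he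
    set a := k.factorization 2 with ha
    set u := k / 2 ^ a with hudef
    have hord : 2 ^ a * u = k := Nat.ordProj_mul_ordCompl_eq_self k 2
    have huodd : Odd u := by
      exact Nat.odd_iff.mpr (Nat.two_dvd_ne_zero.mp (Nat.not_dvd_ordCompl Nat.prime_two hk0))
    have haκ : a < κ := by
      have h2a : 2 ^ a ≤ k := Nat.ordProj_le 2 hk0
      have : (2 : ℕ) ^ a < 2 ^ κ := lt_of_le_of_lt h2a (hκ ▸ hlt)
      exact (Nat.pow_lt_pow_iff_right one_lt_two).mp this
    set M := 2 ^ (κ - 1 - a) with hMdef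
    have hMq : M * 2 ^ (a + 1) = N := by
      rw [hκ, hMdef, ← pow_add]
      congr 1
      omega
    have hp : 2 * 2 ^ a * M = 2 ^ κ := by
      rw [hMdef, show (2 : ℕ) * 2 ^ a = 2 ^ (a + 1) by rw [pow_succ]; ring, ← pow_add]
      congr 1
      omega
    have hnat2 : 2 * k * M = u * N := by
      rw [← hord, hκ, ← hp]; ring
    have hξuN : ξ ^ ((u : ℤ) * N) = -1 := by
      rw [mul_comm, zpow_mul, zpow_natCast, zpow_natCast, hξN]
      exact huodd.neg_one_pow
    have hkey : ξ ^ (2 * e * (M : ℤ)) = -1 := by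
      rcases Int.natAbs_eq e with hcase | hcase
      · have : 2 * e * (M : ℤ) = (u : ℤ) * N := by
          rw [hcase]
          exact_mod_cast congrArg (Nat.cast : ℕ → ℤ) hnat2
        rw [this, hξuN]
      · have : 2 * e * (M : ℤ) = -((u : ℤ) * N) := by
          rw [hcase]
          have : ((2 * k * M : ℕ) : ℤ) = ((u * N : ℕ) : ℤ) := by exact_mod_cast hnat2
          push_cast at this ⊢
          rw [Int.abs_eq_natAbs]
          linear_combination -this
        rw [this, zpow_neg, hξuN]
        simp
    have hwM : (((ξ ^ (2 * e) : (Rq N)ˣ) : Rq N)) ^ M = -1 := by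
      rw [← Units.val_pow_eq_pow_val, ← zpow_natCast (ξ ^ (2 * e)) M, ← zpow_mul, hkey]
      simp
    have heven : Even (2 ^ (a + 1)) := by
      simp [Nat.even_pow]
    have hz := sum_zero _ M (2 ^ (a + 1)) hwM heven
    rwa [hMq] at hz
  rw [Finset.sum_eq_single j]
  · have : ((j : ℤ) - j) = 0 := by ring
    rw [this]
    simp only [zpow_zero, mul_zero, Units.val_one, one_pow, one_mul,
      Finset.sum_const, Finset.card_range, nsmul_eq_mul, mul_one]
    rw [zsmul_eq_mul, zsmul_eq_mul]
    push_cast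
    ring
  · intro i hi hij
    rw [Finset.mem_range] at hi
    have he : ((i : ℤ) - j) ≠ 0 := by
      simp only [sub_ne_zero]
      exact_mod_cast hij
    have hlt : ((i : ℤ) - j).natAbs < N := by omega
    rw [hzero _ he hlt, mul_zero, smul_zero]
  · intro hjn
    exact absurd (Finset.mem_range.mpr hj) hjn
end

section
/- Let N ≥ 1 be a power of two, R = ℤ[X]/(X^N + 1), and for 0 ≤ t < N let σ_t : R → R be the ring homomorphism determined by X ↦ X^{2t+1}. Then for every m ∈ R (with power-basis coordinates m_0, …, m_{N−1} ∈ ℤ) and every j with 1 ≤ j ≤ N−1, one has Σ_{t=0}^{N−1} σ_t(X^{j}·m) = −N·m_{N−j} in R. -/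
open Polynomial Finset

/-!
For `N = 2^κ`, `X^N + 1` is the `2N`-th cyclotomic polynomial, so `ζ = X` is a primitive `2N`-th
root of unity in the domain `ℤ[X]/(X^N + 1)`, and `σ_t(X^j m) = ∑ᵢ mᵢ ζ^((2t+1)(j+i))`. Summing
over `t`, the exponent `k = j + i` contributes `ζ^k ∑ₜ (ζ^(2k))^t`, a geometric sum of an `N`-th
root of unity, which vanishes unless `N ∣ k`, i.e. unless `i = N - j`; for that term every summand
is `ζ^((2t+1)N) = -1`.
-/

namespace IsPrimitiveRoot

variable {R : Type*} [CommRing R] [IsDomain R] {ζ : R} {N : ℕ}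

theorem sum_range_pow_odd_mul_eq_zero (hζ : IsPrimitiveRoot ζ (2 * N)) {k : ℕ} (hk : ¬N ∣ k) :
    ∑ t ∈ range N, ζ ^ ((2 * t + 1) * k) = 0 := by
  have hr : ζ ^ (2 * k) ≠ 1 := by
    rwa [Ne, hζ.pow_eq_one_iff_dvd, Nat.mul_dvd_mul_iff_left two_pos]
  have hrN : (ζ ^ (2 * k)) ^ N = 1 := by
    rw [← pow_mul, hζ.pow_eq_one_iff_dvd]
    exact ⟨k, by ring⟩
  have hgeom : ∑ t ∈ range N, (ζ ^ (2 * k)) ^ t = 0 :=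
    eq_zero_of_ne_zero_of_mul_left_eq_zero (sub_ne_zero_of_ne hr.symm)
      (by rw [mul_neg_geom_sum, hrN, sub_self])
  calc ∑ t ∈ range N, ζ ^ ((2 * t + 1) * k)
      = ζ ^ k * ∑ t ∈ range N, (ζ ^ (2 * k)) ^ t := by
        rw [mul_sum]
        exact sum_congr rfl fun t _ => by ring
    _ = 0 := by rw [hgeom, mul_zero]

theorem pow_odd_mul_eq_neg_one (hζ : IsPrimitiveRoot ζ (2 * N)) (hN : 0 < N) (t : ℕ) :
    ζ ^ ((2 * t + 1) * N) = -1 := by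
  have hζN : ζ ^ N = -1 := (hζ.pow (by omega) (mul_comm 2 N)).eq_neg_one_of_two_right
  rw [mul_comm, pow_mul, hζN, Odd.neg_one_pow ⟨t, rfl⟩]

theorem sum_map_pow_mul_eq_neg_coeff (hζ : IsPrimitiveRoot ζ (2 * N)) (σ : ℕ → R →+* R)
    (hσ : ∀ t < N, σ t ζ = ζ ^ (2 * t + 1)) (c : ℕ → ℤ) {j : ℕ} (hj1 : 1 ≤ j) (hj2 : j < N) :
    ∑ t ∈ range N, σ t (ζ ^ j * ∑ i ∈ range N, c i • ζ ^ i)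
      = (-(N : ℤ) * c (N - j)) • (1 : R) := by
  have hterm : ∀ t ∈ range N, σ t (ζ ^ j * ∑ i ∈ range N, c i • ζ ^ i)
      = ∑ i ∈ range N, c i • ζ ^ ((2 * t + 1) * (j + i)) := by
    intro t ht
    rw [mul_sum, map_sum]
    refine sum_congr rfl fun i _ => ?_
    rw [mul_smul_comm, map_zsmul, ← pow_add, map_pow, hσ t (mem_range.mp ht), ← pow_mul]
  rw [sum_congr rfl hterm, sum_comm, sum_eq_single (N - j)]
  · rw [show j + (N - j) = N by omega, ← smul_sum,
      sum_congr rfl fun t _ => hζ.pow_odd_mul_eq_neg_one (by omega) t, sum_const, card_range,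
      nsmul_eq_mul, mul_neg_one, zsmul_eq_mul, zsmul_eq_mul]
    push_cast
    ring
  · intro i hi hij
    rw [mem_range] at hi
    have hk : ¬N ∣ j + i := by
      rcases lt_or_gt_of_ne (show j + i ≠ N by omega) with h | h
      · exact Nat.not_dvd_of_lt_of_lt_mul_succ (k := 0) (by omega) (by omega)
      · exact Nat.not_dvd_of_lt_of_lt_mul_succ (k := 1) (by omega) (by omega)
    rw [← smul_sum, hζ.sum_range_pow_odd_mul_eq_zero hk, smul_zero]
  · exact fun h => absurd (mem_range.mpr (by omega)) h

end IsPrimitiveRoot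

namespace Rq

theorem rx_pow_eq_neg_one (N : ℕ) : rx N ^ N = -1 := by
  have h := AdjoinRoot.mk_self (f := (X : ℤ[X]) ^ N + 1)
  rw [map_add, map_pow, AdjoinRoot.mk_X, map_one] at h
  exact eq_neg_of_add_eq_zero_left h

theorem X_pow_two_pow_add_one_eq_cyclotomic (κ : ℕ) :
    (X : ℤ[X]) ^ 2 ^ κ + 1 = cyclotomic (2 ^ (κ + 1)) ℤ := by
  rw [cyclotomic_prime_pow_eq_geom_sum Nat.prime_two, sum_range_succ, sum_range_one, pow_zero,
    pow_one, add_comm]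

theorem isDomain_two_pow (κ : ℕ) : IsDomain (Rq (2 ^ κ)) := by
  refine AdjoinRoot.isDomain_of_prime (UniqueFactorizationMonoid.irreducible_iff_prime.mp ?_)
  rw [X_pow_two_pow_add_one_eq_cyclotomic]
  exact cyclotomic.irreducible (by positivity)

theorem neg_one_ne_one {N : ℕ} (hN : 0 < N) : (-1 : Rq N) ≠ 1 := by
  have hinj := AdjoinRoot.of.injective_of_degree_ne_zero (f := (X : ℤ[X]) ^ N + 1)
    (by rw [← C_1, degree_X_pow_add_C hN]; exact_mod_cast hN.ne')
  intro h
  have := @hinj (-1) 1 (by simpa using h)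
  omega

theorem isPrimitiveRoot_rx (κ : ℕ) : IsPrimitiveRoot (rx (2 ^ κ)) (2 * 2 ^ κ) := by
  have hord : orderOf (rx (2 ^ κ)) = 2 ^ (κ + 1) := by
    refine orderOf_eq_prime_pow ?_ ?_
    · rw [rx_pow_eq_neg_one]
      exact neg_one_ne_one (by positivity)
    · rw [pow_succ, pow_mul, rx_pow_eq_neg_one, neg_one_sq]
  rw [← pow_succ', ← hord]
  exact IsPrimitiveRoot.orderOf _

end Rq

theorem stmt3_general (N : ℕ) (hN : ∃ κ : ℕ, N = 2 ^ κ)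
    (σ : ℕ → (Rq N →+* Rq N))
    (hσ : ∀ t < N, σ t (rx N) = rx N ^ (2 * t + 1))
    (m : Rq N) (c : ℕ → ℤ)
    (hm : m = ∑ i ∈ Finset.range N, c i • rx N ^ i)
    (j : ℕ) (hj1 : 1 ≤ j) (hj2 : j ≤ N - 1) :
    ∑ t ∈ Finset.range N, σ t (rx N ^ j * m)
      = (-(N : ℤ) * c (N - j)) • (1 : Rq N) := by
  obtain ⟨κ, rfl⟩ := hN
  have := Rq.isDomain_two_pow κ
  subst hm
  exact (Rq.isPrimitiveRoot_rx κ).sum_map_pow_mul_eq_neg_coeff σ hσ c hj1 (by omega)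

/-- For `N` a power of two, `σ t : R → R` the ring homomorphism `X ↦ X^(2t+1)`
(for `0 ≤ t < N`), `m ∈ R = ℤ[X]/(X^N+1)` with power-basis coordinates `c`, and
`1 ≤ j ≤ N-1`, one has `∑_{t=0}^{N-1} σ_t(X^j · m) = -N · m_{N-j}`. -/
theorem stmt3 (N : ℕ) (hN1 : 1 ≤ N) (hN : ∃ κ : ℕ, N = 2 ^ κ)
    (σ : ℕ → (Rq N →+* Rq N))
    (hσ : ∀ t < N, σ t (rx N) = rx N ^ (2 * t + 1))
    (m : Rq N) (c : ℕ → ℤ)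
    (hm : m = ∑ i ∈ Finset.range N, c i • rx N ^ i)
    (j : ℕ) (hj1 : 1 ≤ j) (hj2 : j ≤ N - 1) :
    ∑ t ∈ Finset.range N, σ t (rx N ^ j * m)
      = (-(N : ℤ) * c (N - j)) • (1 : Rq N) :=
  stmt3_general N hN σ hσ m c hm j hj1 hj2
end

section
/- Let N ≥ 1 be a power of two, R = ℤ[X]/(X^N + 1), and for 0 ≤ t < N let σ_t : R → R be the ring homomorphism determined by X ↦ X^{2t+1}; X is a unit of R with X^{−1} = −X^{N−1}. Let m_0, …, m_{N−1} ∈ R, and write m_{i,l} ∈ ℤ for the power-basis coordinates of m_i (so m_i = Σ_{0≤l<N} m_{i,l}X^l). Then for every 0 ≤ j < N: Σ_{t=0}^{N−1} σ_t(X^{−j}) · ( Σ_{i=0}^{N−1} X^i·σ_t(m_i) ) = N · Σ_{i=0}^{N−1} m_{i,j}·X^i in R. -/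
open Polynomial Finset

/-- Character-sum orthogonality: if `x^(2^κ) = -1` then
`∑_{t<2^κ} x^((2t+1)e)` is `±2^κ` if `2^κ ∣ e` and `0` otherwise. -/
lemma key_sum {R : Type*} [CommRing R] :
    ∀ (κ : ℕ) (x : R), x ^ (2 ^ κ) = -1 → ∀ e : ℕ,
      ∑ t ∈ Finset.range (2 ^ κ), x ^ ((2 * t + 1) * e)
        = if 2 ^ κ ∣ e then ((-1 : R)) ^ (e / 2 ^ κ) * (2 ^ κ : ℕ) else 0 := by
  intro κ
  induction κ with
  | zero =>
    intro x hx e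
    rw [pow_zero] at hx ⊢
    rw [pow_one] at hx
    simp [hx]
  | succ κ ih =>
    intro x hx e
    have h2 : (2 : ℕ) ^ (κ + 1) = 2 ^ κ + 2 ^ κ := by ring
    have hx4 : x ^ (2 ^ (κ + 2)) = 1 := by
      have : (2 : ℕ) ^ (κ + 2) = 2 ^ (κ + 1) * 2 := by ring
      rw [this, pow_mul, hx]; ring
    rcases Nat.even_or_odd e with he | he
    · obtain ⟨f, hf⟩ := he
      have hf2 : e = 2 * f := by omega
      subst hf2
      have hx2 : (x ^ 2) ^ (2 ^ κ) = -1 := by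
        rw [← pow_mul, show 2 * 2 ^ κ = 2 ^ (κ + 1) by ring, hx]
      have hterm : ∀ t : ℕ, x ^ ((2 * t + 1) * (2 * f)) = (x ^ 2) ^ ((2 * t + 1) * f) := by
        intro t; rw [← pow_mul]; ring_nf
      have hshift : ∀ t : ℕ, x ^ ((2 * (2 ^ κ + t) + 1) * (2 * f)) = x ^ ((2 * t + 1) * (2 * f)) := by
        intro t
        have hE : (2 * (2 ^ κ + t) + 1) * (2 * f) = (2 * t + 1) * (2 * f) + 2 ^ (κ + 2) * f := by
          ring
        rw [hE, pow_add, pow_mul x (2 ^ (κ + 2)) f, hx4, one_pow, mul_one]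
      conv_lhs => rw [h2]
      rw [Finset.sum_range_add]
      simp only [hshift, hterm]
      rw [ih (x ^ 2) hx2 f]
      have hdvd : 2 ^ (κ + 1) ∣ 2 * f ↔ 2 ^ κ ∣ f := by
        rw [show (2:ℕ) ^ (κ+1) = 2 * 2 ^ κ by ring]
        exact mul_dvd_mul_iff_left (by norm_num)
      have hquot : 2 * f / 2 ^ (κ + 1) = f / 2 ^ κ := by
        rw [show (2:ℕ) ^ (κ+1) = 2 * 2 ^ κ by ring]
        exact Nat.mul_div_mul_left _ _ (by norm_num)
      by_cases h : 2 ^ κ ∣ f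
      · rw [if_pos h, if_pos (hdvd.mpr h), hquot]
        push_cast
        ring
      · rw [if_neg h, if_neg (fun hc => h (hdvd.mp hc))]
        ring
    · have hnd : ¬ 2 ^ (κ + 1) ∣ e := by
        intro hc
        have : 2 ∣ e := dvd_trans (dvd_pow_self 2 (Nat.succ_ne_zero κ)) hc
        exact (Nat.not_even_iff_odd.mpr he) (even_iff_two_dvd.mpr this)
      rw [if_neg hnd]
      conv_lhs => rw [h2]
      rw [Finset.sum_range_add]
      have hshift : ∀ t : ℕ, x ^ ((2 * (2 ^ κ + t) + 1) * e) = - x ^ ((2 * t + 1) * e) := by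
        intro t
        have hE : (2 * (2 ^ κ + t) + 1) * e = (2 * t + 1) * e + 2 ^ (κ + 1) * e := by
          ring
        rw [hE, pow_add, pow_mul x (2 ^ (κ + 1)) e, hx, he.neg_one_pow, mul_neg_one]
      simp [hshift]

lemma rx_pow_N (N : ℕ) : rx N ^ N = -1 := by
  have h : (AdjoinRoot.mk ((X : ℤ[X]) ^ N + 1)) ((X : ℤ[X]) ^ N + 1) = 0 :=
    AdjoinRoot.mk_self
  rw [map_add, map_pow, map_one, AdjoinRoot.mk_X] at h
  have : rx N = AdjoinRoot.root ((X : ℤ[X]) ^ N + 1) := rfl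
  rw [this]
  linear_combination h

/-- Master identity of the cleartext matrix transpose. For `N` a power of two,
`σ t : R → R` the ring homomorphism `X ↦ X^(2t+1)` (for `0 ≤ t < N`),
`X^{-1} = -X^(N-1)`, elements `m 0, …, m (N-1)` of `R = ℤ[X]/(X^N+1)` with
power-basis coordinates `c i l`, and `0 ≤ j < N`:
`∑_t σ_t(X^{-j}) · (∑_i X^i·σ_t(m_i)) = N · ∑_i m_{i,j}·X^i`. -/
theorem stmt4 (N : ℕ) (hN1 : 1 ≤ N) (hN : ∃ κ : ℕ, N = 2 ^ κ)
    (σ : ℕ → (Rq N →+* Rq N))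
    (hσ : ∀ t < N, σ t (rx N) = rx N ^ (2 * t + 1))
    (m : ℕ → Rq N) (c : ℕ → ℕ → ℤ)
    (hm : ∀ i < N, m i = ∑ l ∈ Finset.range N, c i l • rx N ^ l)
    (j : ℕ) (hj : j < N) :
    ∑ t ∈ Finset.range N,
        σ t ((-(rx N ^ (N - 1))) ^ j) *
          (∑ i ∈ Finset.range N, rx N ^ i * σ t (m i))
      = (N : ℤ) • ∑ i ∈ Finset.range N, c i j • rx N ^ i := by
  set x := rx N with hxdef
  have hxN : x ^ N = -1 := rx_pow_N N
  have hNj : (N - 1) * j + j = N * j := by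
    have h : N - 1 + 1 = N := by omega
    calc (N - 1) * j + j = ((N - 1) + 1) * j := by rw [add_mul, one_mul]
    _ = N * j := by rw [h]
  -- step 1: rewrite each summand as a double sum
  have main : ∀ t ∈ Finset.range N,
      σ t ((-(x ^ (N - 1))) ^ j) * (∑ i ∈ Finset.range N, x ^ i * σ t (m i))
        = ∑ i ∈ Finset.range N, ∑ l ∈ Finset.range N,
            c i l • ((-1 : Rq N) ^ j * x ^ ((2 * t + 1) * ((N - 1) * j + l)) * x ^ i) := by
    intro t ht
    rw [Finset.mem_range] at ht
    have hA : σ t ((-(x ^ (N - 1))) ^ j)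
        = (-1 : Rq N) ^ j * x ^ ((2 * t + 1) * ((N - 1) * j)) := by
      rw [map_pow, map_neg, map_pow, hσ t ht, neg_pow, ← pow_mul, ← pow_mul]
    rw [hA, Finset.mul_sum]
    refine Finset.sum_congr rfl fun i hi => ?_
    rw [Finset.mem_range] at hi
    rw [hm i hi, map_sum, Finset.mul_sum, Finset.mul_sum]
    refine Finset.sum_congr rfl fun l hl => ?_
    rw [map_zsmul, map_pow, hσ t ht, ← pow_mul,
      show (2 * t + 1) * ((N - 1) * j + l)
        = (2 * t + 1) * ((N - 1) * j) + (2 * t + 1) * l by ring,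
      pow_add]
    simp only [zsmul_eq_mul]
    ring
  rw [Finset.sum_congr rfl main, Finset.sum_comm]
  obtain ⟨κ, hκ⟩ := hN
  have hkey : ∀ e : ℕ, ∑ t ∈ Finset.range N, x ^ ((2 * t + 1) * e)
      = if N ∣ e then ((-1 : Rq N)) ^ (e / N) * (N : ℕ) else 0 := by
    intro e
    subst hκ
    exact key_sum κ x hxN e
  have hdvd : ∀ l < N, (N ∣ (N - 1) * j + l ↔ l = j) := by
    intro l hl
    constructor
    · intro h
      have hcast : (N : ℤ) ∣ ((N : ℤ) - 1) * j + l := by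
        have := Int.natCast_dvd_natCast.mpr h
        push_cast [Nat.cast_sub hN1] at this
        exact this
      have h4 : (N : ℤ) ∣ (l : ℤ) - j := by
        have h5 := dvd_sub hcast (dvd_mul_right (N : ℤ) (j : ℤ))
        have h6 : ((N : ℤ) - 1) * j + l - (N : ℤ) * j = (l : ℤ) - j := by ring
        rwa [h6] at h5
      have h7 : (l : ℤ) - j = 0 :=
        Int.eq_zero_of_abs_lt_dvd h4 (by rw [abs_lt]; omega)
      omega
    · rintro rfl
      rw [hNj]
      exact dvd_mul_right N _
  have inner : ∀ i ∈ Finset.range N,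
      ∑ t ∈ Finset.range N, ∑ l ∈ Finset.range N,
          c i l • ((-1 : Rq N) ^ j * x ^ ((2 * t + 1) * ((N - 1) * j + l)) * x ^ i)
        = c i j • ((N : ℤ) • x ^ i) := by
    intro i _
    rw [Finset.sum_comm]
    have h1 : ∀ l ∈ Finset.range N,
        ∑ t ∈ Finset.range N,
            c i l • ((-1 : Rq N) ^ j * x ^ ((2 * t + 1) * ((N - 1) * j + l)) * x ^ i)
          = c i l • ((-1 : Rq N) ^ j *
              (if N ∣ (N - 1) * j + l then ((-1 : Rq N)) ^ (((N - 1) * j + l) / N) * (N : ℕ) else 0) * x ^ i) := by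
      intro l _
      rw [← hkey]
      rw [← Finset.smul_sum, ← Finset.sum_mul, ← Finset.mul_sum]
    rw [Finset.sum_congr rfl h1]
    rw [Finset.sum_eq_single_of_mem j (Finset.mem_range.mpr hj)]
    · rw [if_pos ((hdvd j hj).mpr rfl), hNj, Nat.mul_div_cancel_left j (by omega : 0 < N)]
      simp only [zsmul_eq_mul]
      have hone : ((-1 : Rq N)) ^ j * (-1 : Rq N) ^ j = 1 := by
        rw [← mul_pow]; norm_num
      push_cast
      linear_combination (c i j : Rq N) * ((N : ℕ) : Rq N) * x ^ i * hone
    · intro l hl hne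
      rw [if_neg fun h => hne ((hdvd l (Finset.mem_range.mp hl)).mp h)]
      simp
  rw [Finset.sum_congr rfl inner, Finset.smul_sum]
  refine Finset.sum_congr rfl fun i _ => ?_
  rw [smul_comm]
end

section
/- Let N ≥ 1 be a power of two, R = ℤ[X]/(X^N + 1), and let M ≥ 1 be an integer with 2M dividing N. For elements a_0, …, a_{2M−1} ∈ R define, for 0 ≤ j < M, E(j) = Σ_{0≤i<M} X^{2ij·(N/M)}·a_{2i} and O(j) = Σ_{0≤i<M} X^{2ij·(N/M)}·a_{2i+1}. Then for every 0 ≤ j < M: (1) Σ_{0≤i<2M} X^{2ij·(N/(2M))}·a_i = E(j) + X^{j·(N/M)}·O(j), and (2) Σ_{0≤i<2M} X^{2i(j+M)·(N/(2M))}·a_i = E(j) − X^{j·(N/M)}·O(j). -/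
open Polynomial Finset

lemma sum_even_odd {β : Type*} [AddCommMonoid β] (f : ℕ → β) (M : ℕ) :
    ∑ i ∈ Finset.range (2 * M), f i
      = ∑ i ∈ Finset.range M, f (2 * i) + ∑ i ∈ Finset.range M, f (2 * i + 1) := by
  induction M with
  | zero => simp
  | succ n ih =>
    have h : 2 * (n + 1) = (2 * n + 1) + 1 := by ring
    rw [h, Finset.sum_range_succ, Finset.sum_range_succ,
      Finset.sum_range_succ (fun i => f (2 * i)), Finset.sum_range_succ, ih]
    abel

/-- Butterfly identities for the `Tweak` algorithm. For `N` a power of two,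
`M ≥ 1` with `2M ∣ N`, elements `a 0, …, a (2M-1)` of `R = ℤ[X]/(X^N+1)`, and
`0 ≤ j < M`, writing `E j = ∑_{i<M} X^(2ij(N/M))·a_{2i}` and
`O j = ∑_{i<M} X^(2ij(N/M))·a_{2i+1}`:
(1) `∑_{i<2M} X^(2ij(N/2M))·a_i = E j + X^(j(N/M))·O j`, and
(2) `∑_{i<2M} X^(2i(j+M)(N/2M))·a_i = E j - X^(j(N/M))·O j`. -/
theorem stmt5 (N : ℕ) (hN1 : 1 ≤ N) (hN : ∃ κ : ℕ, N = 2 ^ κ)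
    (M : ℕ) (hM : 1 ≤ M) (hdvd : 2 * M ∣ N)
    (a : ℕ → Rq N) (j : ℕ) (hj : j < M) :
    (∑ i ∈ Finset.range (2 * M), rx N ^ (2 * i * j * (N / (2 * M))) * a i
       = (∑ i ∈ Finset.range M, rx N ^ (2 * i * j * (N / M)) * a (2 * i))
         + rx N ^ (j * (N / M)) *
           (∑ i ∈ Finset.range M, rx N ^ (2 * i * j * (N / M)) * a (2 * i + 1)))
    ∧
    (∑ i ∈ Finset.range (2 * M), rx N ^ (2 * i * (j + M) * (N / (2 * M))) * a i
       = (∑ i ∈ Finset.range M, rx N ^ (2 * i * j * (N / M)) * a (2 * i))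
         - rx N ^ (j * (N / M)) *
           (∑ i ∈ Finset.range M, rx N ^ (2 * i * j * (N / M)) * a (2 * i + 1))) := by
  obtain ⟨d, hd⟩ := hdvd
  have hM0 : 0 < M := hM
  have hN2M : N / (2 * M) = d := by
    rw [hd]; exact Nat.mul_div_cancel_left d (by omega)
  have hNM : N / M = 2 * d := by
    rw [hd, show 2 * M * d = M * (2 * d) by ring]
    exact Nat.mul_div_cancel_left _ hM0
  have h2N : rx N ^ (2 * N) = 1 := by
    rw [pow_mul']; rw [rx_pow_N]; ring
  have hkill : ∀ i : ℕ, rx N ^ (2 * N * i) = 1 := fun i => by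
    rw [pow_mul, h2N, one_pow]
  have hrootN : rx N ^ N = -1 := rx_pow_N N
  constructor
  · rw [sum_even_odd (fun i => rx N ^ (2 * i * j * (N / (2 * M))) * a i) M]
    congr 1
    · refine Finset.sum_congr rfl fun i _ => ?_
      congr 2
      rw [hN2M, hNM]; ring
    · rw [Finset.mul_sum]
      refine Finset.sum_congr rfl fun i _ => ?_
      rw [hN2M, hNM, ← mul_assoc, ← pow_add]
      congr 2
      ring
  · rw [sum_even_odd (fun i => rx N ^ (2 * i * (j + M) * (N / (2 * M))) * a i) M,
      sub_eq_add_neg]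
    congr 1
    · refine Finset.sum_congr rfl fun i _ => ?_
      have he : 2 * (2 * i) * (j + M) * (N / (2 * M)) = 2 * i * j * (N / M) + (2 * N) * i := by
        rw [hN2M, hNM, hd]; ring
      rw [he, pow_add, hkill, mul_one]
    · rw [neg_mul_eq_neg_mul, Finset.mul_sum]
      refine Finset.sum_congr rfl fun i _ => ?_
      have ho : 2 * (2 * i + 1) * (j + M) * (N / (2 * M))
          = (j * (N / M) + 2 * i * j * (N / M)) + ((2 * N) * i + N) := by
        rw [hN2M, hNM, hd]; ring
      rw [ho, pow_add, pow_add (rx N) (2 * N * i) N, hkill, hrootN, pow_add]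
      ring
end

section
/- Let N ≥ 1 be a power of two and R = ℤ[X]/(X^N + 1). Define recursively, for each power of two n dividing N and each family c : {0,…,n−1} → R, a family Tweak(n, c) : {0,…,n−1} → R as follows: Tweak(1, c)_0 = c_0; for n = 2^κ with κ ≥ 1, set d_0 = c_0 and, for ℓ = 0, 1, …, κ−1, let aux = Tweak(2^ℓ, (c_{(2j+1)·n/2^{ℓ+1}})_{0≤j<2^ℓ}) and, for 0 ≤ j < 2^ℓ, set d_{j+2^ℓ} = d_j − X^{(N/2^ℓ)·j}·aux_j and then d_j = d_j + X^{(N/2^ℓ)·j}·aux_j; finally Tweak(n, c) = (d_j)_{0≤j<n}. Then for every power of two n dividing N, every c : {0,…,n−1} → R and every 0 ≤ j < n: Tweak(n, c)_j = Σ_{0≤i<n} X^{2ij·(N/n)}·c_i. -/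
open Polynomial Finset

/-- The recursive `Tweak` procedure on families of elements of `ℤ[X]/(X^N+1)`,
for `n = 2^κ` inputs. `Tweak(1, c)₀ = c₀`; for `n = 2^κ` with `κ ≥ 1`, one sets
`d₀ = c₀` and, for `ℓ = 0, …, κ-1`, computes
`aux = Tweak(2^ℓ, (c_{(2j+1)·n/2^(ℓ+1)})_{j<2^ℓ})` and then, for `0 ≤ j < 2^ℓ`,
`d_{j+2^ℓ} = d_j - X^((N/2^ℓ)·j)·aux_j` followed by
`d_j = d_j + X^((N/2^ℓ)·j)·aux_j`. (Entries at indices `≥ n` are set to `0`.) -/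
noncomputable def tweak (N : ℕ) (κ : ℕ) : (ℕ → Rq N) → ℕ → Rq N :=
  κ.strongRecOn fun κ ih c =>
    Nat.rec (motive := fun _ => ℕ → Rq N)
      (fun j => if j = 0 then c 0 else 0)
      (fun t d =>
        let aux : ℕ → Rq N :=
          (if h : t < κ then ih t h else fun _ _ => 0)
            (fun j => c ((2 * j + 1) * 2 ^ κ / 2 ^ (t + 1)))
        fun j =>
          if j < 2 ^ t then d j + rx N ^ ((N / 2 ^ t) * j) * aux j
          else if j < 2 ^ (t + 1) then
            d (j - 2 ^ t) - rx N ^ ((N / 2 ^ t) * (j - 2 ^ t)) * aux (j - 2 ^ t)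
          else d j)
      κ

noncomputable def tweakD (N κ : ℕ) (c : ℕ → Rq N) : ℕ → ℕ → Rq N :=
  Nat.rec (motive := fun _ => ℕ → Rq N)
    (fun j => if j = 0 then c 0 else 0)
    (fun t d =>
      let aux : ℕ → Rq N :=
        (if _h : t < κ then tweak N t else fun _ _ => 0)
          (fun j => c ((2 * j + 1) * 2 ^ κ / 2 ^ (t + 1)))
      fun j =>
        if j < 2 ^ t then d j + rx N ^ ((N / 2 ^ t) * j) * aux j
        else if j < 2 ^ (t + 1) then
          d (j - 2 ^ t) - rx N ^ ((N / 2 ^ t) * (j - 2 ^ t)) * aux (j - 2 ^ t)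
        else d j)

lemma tweak_eq_D (N κ : ℕ) (c : ℕ → Rq N) : tweak N κ c = tweakD N κ c κ := by
  unfold tweak; rw [Nat.strongRecOn_eq]; rfl

lemma tweakD_succ (N κ : ℕ) (c : ℕ → Rq N) (t j : ℕ) :
    tweakD N κ c (t + 1) j =
      if j < 2 ^ t then
        tweakD N κ c t j + rx N ^ ((N / 2 ^ t) * j) *
          (if _h : t < κ then tweak N t else fun _ _ => 0)
            (fun j => c ((2 * j + 1) * 2 ^ κ / 2 ^ (t + 1))) j
      else if j < 2 ^ (t + 1) then
        tweakD N κ c t (j - 2 ^ t) - rx N ^ ((N / 2 ^ t) * (j - 2 ^ t)) *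
          (if _h : t < κ then tweak N t else fun _ _ => 0)
            (fun j => c ((2 * j + 1) * 2 ^ κ / 2 ^ (t + 1))) (j - 2 ^ t)
      else tweakD N κ c t j := rfl

lemma rx_pow_two_mul (N i : ℕ) : rx N ^ (2 * i * N) = 1 := by
  rw [show 2 * i * N = N * (2 * i) by ring, pow_mul, rx_pow_N, pow_mul, neg_one_sq, one_pow]

lemma rx_pow_odd_mul (N i : ℕ) : rx N ^ ((2 * i + 1) * N) = -1 := by
  rw [add_mul, one_mul, pow_add, rx_pow_two_mul, one_mul, rx_pow_N]

lemma sum_range_two_mul {M : Type*} [AddCommMonoid M] (n : ℕ) (f : ℕ → M) :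
    ∑ i ∈ range (2 * n), f i = (∑ i ∈ range n, f (2 * i)) + ∑ i ∈ range n, f (2 * i + 1) := by
  induction n with
  | zero => simp
  | succ n ih =>
    rw [mul_add, mul_one, show 2 * n + 2 = (2 * n + 1) + 1 from rfl, sum_range_succ,
      sum_range_succ, sum_range_succ (fun i => f (2 * i)), sum_range_succ, ih]
    abel

lemma tweak_correct (N : ℕ) : ∀ κ : ℕ, 2 ^ κ ∣ N → ∀ (c : ℕ → Rq N) (j : ℕ), j < 2 ^ κ →
    tweak N κ c j = ∑ i ∈ Finset.range (2 ^ κ), rx N ^ (2 * i * j * (N / 2 ^ κ)) * c i := by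
  intro κ
  induction κ using Nat.strongRecOn with
  | ind κ IH =>
    intro hκ c j hj
    rw [tweak_eq_D]
    have main : ∀ t, t ≤ κ → ∀ j, j < 2 ^ t →
        tweakD N κ c t j
          = ∑ i ∈ Finset.range (2 ^ t),
              rx N ^ (2 * i * j * (N / 2 ^ t)) * c (i * 2 ^ (κ - t)) := by
      intro t
      induction t with
      | zero =>
        intro _ j hj
        interval_cases j
        simp [tweakD]
      | succ t ihT =>
        intro ht j hj
        have htκ : t < κ := ht
        have h2t : (2 : ℕ) ^ t ∣ N := (pow_dvd_pow 2 htκ.le).trans hκ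
        have h2t1 : (2 : ℕ) ^ (t + 1) ∣ N := (pow_dvd_pow 2 ht).trans hκ
        have hp : (2 : ℕ) ^ (t + 1) = 2 * 2 ^ t := by rw [pow_succ]; ring
        have hNdiv : N / 2 ^ t = 2 * (N / 2 ^ (t + 1)) := by
          obtain ⟨m, hm⟩ := h2t1
          subst hm
          rw [hp, Nat.mul_div_cancel_left _ (by positivity),
            show 2 * 2 ^ t * m = 2 ^ t * (2 * m) by ring,
            Nat.mul_div_cancel_left _ (by positivity)]
        have hNt : 2 ^ t * (N / 2 ^ t) = N := Nat.mul_div_cancel' h2t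
        have hidx : ∀ i : ℕ, (2 * i + 1) * 2 ^ κ / 2 ^ (t + 1) = (2 * i + 1) * 2 ^ (κ - (t + 1)) := by
          intro i
          rw [Nat.mul_div_assoc _ (pow_dvd_pow 2 ht), Nat.pow_div ht (by norm_num)]
        have hsplit : (2 : ℕ) ^ (κ - t) = 2 * 2 ^ (κ - (t + 1)) := by
          rw [show κ - t = (κ - (t + 1)) + 1 by omega, pow_succ]; ring
        rw [tweakD_succ, dif_pos htκ]
        by_cases hjt : j < 2 ^ t
        · rw [if_pos hjt, ihT htκ.le j hjt, IH t htκ h2t _ _ hjt]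
          simp only [hidx]
          conv_rhs => rw [hp, sum_range_two_mul]
          simp only [← hp]
          rw [mul_sum]
          congr 1
          · refine sum_congr rfl fun i _ => ?_
            rw [show 2 * i * j * (N / 2 ^ t) = 2 * (2 * i) * j * (N / 2 ^ (t + 1)) by
                rw [hNdiv]; ring,
              show i * 2 ^ (κ - t) = 2 * i * 2 ^ (κ - (t + 1)) by rw [hsplit]; ring]
          · refine sum_congr rfl fun i _ => ?_
            rw [← mul_assoc, ← pow_add,
              show (N / 2 ^ t) * j + 2 * i * j * (N / 2 ^ t)
                = 2 * (2 * i + 1) * j * (N / 2 ^ (t + 1)) by rw [hNdiv]; ring]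
        · rw [if_neg hjt, if_pos hj]
          set j' := j - 2 ^ t with hj'def
          have hj' : j' < 2 ^ t := by omega
          have hjeq : j = j' + 2 ^ t := by omega
          obtain ⟨m, hm⟩ := h2t1
          have hNt2 : N / 2 ^ (t + 1) = m := by
            rw [hm, Nat.mul_div_cancel_left _ (by positivity)]
          have hNdiv2 : N / 2 ^ t = 2 * m := by rw [hNdiv, hNt2]
          rw [ihT htκ.le j' hj', IH t htκ h2t _ _ hj']
          simp only [hidx]
          conv_rhs => rw [hp, sum_range_two_mul]
          simp only [← hp]
          rw [sub_eq_add_neg, mul_sum, ← Finset.sum_neg_distrib]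
          congr 1
          · refine sum_congr rfl fun i _ => ?_
            rw [show 2 * (2 * i) * j * (N / 2 ^ (t + 1))
                  = 2 * i * j' * (N / 2 ^ t) + 2 * i * N by
                rw [hjeq, hNdiv2, hNt2, hm, hp]; ring,
              pow_add, rx_pow_two_mul, mul_one,
              show 2 * i * 2 ^ (κ - (t + 1)) = i * 2 ^ (κ - t) by rw [hsplit]; ring]
          · refine sum_congr rfl fun i _ => ?_
            rw [show 2 * (2 * i + 1) * j * (N / 2 ^ (t + 1))
                  = ((N / 2 ^ t) * j' + 2 * i * j' * (N / 2 ^ t)) + (2 * i + 1) * N by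
                rw [hjeq, hNdiv2, hNt2, hm, hp]; ring,
              pow_add, rx_pow_odd_mul, pow_add]
            ring
    have := main κ le_rfl j hj
    simpa using this

/-- Correctness of the `Tweak` algorithm: for `N` a power of two, `n = 2^κ` a
power of two dividing `N`, any family `c` of elements of `ℤ[X]/(X^N+1)` and any
`0 ≤ j < n`, one has `Tweak(n, c)_j = ∑_{i<n} X^(2ij(N/n))·c_i`. -/
theorem stmt6 (N : ℕ) (hN1 : 1 ≤ N) (hN : ∃ κ : ℕ, N = 2 ^ κ)
    (κ : ℕ) (hκ : 2 ^ κ ∣ N) (c : ℕ → Rq N) (j : ℕ) (hj : j < 2 ^ κ) :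
    tweak N κ c j
      = ∑ i ∈ Finset.range (2 ^ κ), rx N ^ (2 * i * j * (N / 2 ^ κ)) * c i :=
  tweak_correct N κ hκ c j hj
end

section
/- Let N ≥ 1, R = ℤ[X]/(X^N + 1), and let τ : R → R be the ring homomorphism determined by τ(X) = −X^{N−1} (i.e., X ↦ X^{−1}). For m ∈ R let Toep(m) ∈ M_N(ℤ) be the matrix, in the power basis 1, X, …, X^{N−1}, of the ℤ-linear map x ↦ m·x on R. Then for all m, m' ∈ R: Toep(m·τ(m')) = Toep(m)·Toep(m')^T. -/
open Polynomial Finset Matrix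

/-- `X^N + 1` is monic when `N ≥ 1`. -/
theorem monic_XN_add_one (N : ℕ) (hN : 0 < N) : ((X : ℤ[X]) ^ N + 1).Monic := by
  simpa using Polynomial.monic_X_pow_add_C (1 : ℤ) hN.ne'

/-- `Toep m` is the matrix, in the power basis `1, X, …, X^(N-1)` of
`ℤ[X]/(X^N+1)`, of the `ℤ`-linear multiplication-by-`m` map `x ↦ m·x`. -/
noncomputable def Toep (N : ℕ) (hN : 0 < N) (m : Rq N) :
    Matrix (Fin ((X : ℤ[X]) ^ N + 1).natDegree)
      (Fin ((X : ℤ[X]) ^ N + 1).natDegree) ℤ :=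
  LinearMap.toMatrix (AdjoinRoot.powerBasis' (monic_XN_add_one N hN)).basis
    (AdjoinRoot.powerBasis' (monic_XN_add_one N hN)).basis
    (LinearMap.mulLeft ℤ m)

/-!
Because `R` is commutative, `m ↦ (Toep m)ᵀ` is a ring homomorphism just like `m ↦ Toep (τ m)`,
so the two agree everywhere once they agree on the generator `X`. In the power basis, `Toep X` is
the negacyclic shift `Xʲ ↦ Xʲ⁺¹`, `Xᴺ⁻¹ ↦ -1`, and `Toep (-Xᴺ⁻¹)` is the inverse shift
`Xʲ ↦ Xʲ⁻¹`, `1 ↦ -Xᴺ⁻¹`, which is its transpose; both matrices are read off from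
`Xᵏ ≡ -Xᵏ⁻ᴺ (mod Xᴺ + 1)` for `N ≤ k < 2N`.
-/

theorem Algebra.leftMulMatrix_algHom_apply_eq_transpose {R S ι : Type*} [CommRing R] [CommRing S]
    [Algebra R S] [Fintype ι] [DecidableEq ι] (b : Module.Basis ι R S) {x : S}
    (hx : Algebra.adjoin R {x} = ⊤) (τ : S →ₐ[R] S)
    (hτx : leftMulMatrix b (τ x) = (leftMulMatrix b x)ᵀ) (a : S) :
    leftMulMatrix b (τ a) = (leftMulMatrix b a)ᵀ := by
  have ha : a ∈ Algebra.adjoin R {x} := hx ▸ Algebra.mem_top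
  induction ha using Algebra.adjoin_induction with
  | mem y hy => rwa [Set.mem_singleton_iff.1 hy]
  | algebraMap r => simp only [AlgHom.commutes, algebraMap_eq_diagonal, diagonal_transpose]
  | add y z _ _ hy hz => simp only [map_add, hy, hz, transpose_add]
  | mul y z _ _ hy hz =>
    -- `ᵀ` reverses products, which commutativity of `S` then undoes
    rw [map_mul, map_mul, hy, hz, ← transpose_mul, ← map_mul, mul_comm, map_mul]

theorem natDegree_X_pow_add_one (N : ℕ) : ((X : ℤ[X]) ^ N + 1).natDegree = N := by
  simpa using natDegree_X_pow_add_C (R := ℤ) (n := N) (r := 1)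

theorem X_pow_modByMonic_X_pow_add_one (N : ℕ) (hN : 0 < N) {k : ℕ} (hk : k < 2 * N) :
    (X : ℤ[X]) ^ k %ₘ (X ^ N + 1) = if k < N then X ^ k else -X ^ (k - N) := by
  have hmonic := monic_XN_add_one N hN
  have hsmall : ∀ l < N, (X : ℤ[X]) ^ l %ₘ (X ^ N + 1) = X ^ l := fun l hl => by
    rw [modByMonic_eq_self_iff hmonic, degree_X_pow, degree_eq_natDegree hmonic.ne_zero,
      natDegree_X_pow_add_one]
    exact_mod_cast hl
  split_ifs with hkN
  · exact hsmall k hkN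
  · obtain ⟨l, rfl⟩ := Nat.exists_eq_add_of_le (not_lt.1 hkN)
    have hwrap : (X ^ N + 1 : ℤ[X]) ∣ X ^ (N + l) - -X ^ l := ⟨X ^ l, by ring⟩
    rw [modByMonic_eq_of_dvd_sub hmonic hwrap, neg_modByMonic, hsmall l (by omega),
      Nat.add_sub_cancel_left]

theorem coeff_X_pow_modByMonic_X_pow_add_one (N : ℕ) (hN : 0 < N) {k i : ℕ} (hk : k < 2 * N)
    (hi : i < N) :
    ((X : ℤ[X]) ^ k %ₘ (X ^ N + 1)).coeff i =
      if k = i then 1 else if k = i + N then -1 else 0 := by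
  rw [X_pow_modByMonic_X_pow_add_one N hN hk]
  split_ifs <;> simp only [coeff_neg, coeff_X_pow] <;> split_ifs <;> omega

section Toep

variable (N : ℕ) (hN : 0 < N)

theorem Toep_mul (m m' : Rq N) : Toep N hN (m * m') = Toep N hN m * Toep N hN m' :=
  map_mul (Algebra.leftMulMatrix _) m m'

theorem Toep_neg (m : Rq N) : Toep N hN (-m) = -Toep N hN m :=
  map_neg (Algebra.leftMulMatrix _) m

theorem Toep_apply (m : Rq N) (i j : Fin ((X : ℤ[X]) ^ N + 1).natDegree) :
    Toep N hN m i j =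
      (AdjoinRoot.modByMonicHom (monic_XN_add_one N hN) (m * rx N ^ (j : ℕ))).coeff i := by
  have hb : (AdjoinRoot.powerBasis' (monic_XN_add_one N hN)).basis j = rx N ^ (j : ℕ) :=
    (AdjoinRoot.powerBasis' (monic_XN_add_one N hN)).basis_eq_pow j
  refine (LinearMap.toMatrix_apply _ _ (LinearMap.mulLeft ℤ m) i j).trans ?_
  -- `Toep` is indexed by `Fin natDegree`, the basis by `Fin dim`: equal only after unfolding
  erw [LinearMap.mulLeft_apply, hb]
  rfl

theorem Toep_rx_pow_apply (a : ℕ) (i j : Fin ((X : ℤ[X]) ^ N + 1).natDegree) :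
    Toep N hN (rx N ^ a) i j = ((X : ℤ[X]) ^ (a + j) %ₘ (X ^ N + 1)).coeff i := by
  rw [Toep_apply, ← pow_add, rx, ← AdjoinRoot.mk_X, ← map_pow, AdjoinRoot.modByMonicHom_mk]

theorem Toep_neg_rx_pow_pred : Toep N hN (-(rx N ^ (N - 1))) = (Toep N hN (rx N))ᵀ := by
  ext i j
  have hi : (i : ℕ) < N := by simpa [natDegree_X_pow_add_one] using i.isLt
  have hj : (j : ℕ) < N := by simpa [natDegree_X_pow_add_one] using j.isLt
  rw [Toep_neg, Matrix.neg_apply, transpose_apply, Toep_rx_pow_apply, ← pow_one (rx N),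
    Toep_rx_pow_apply, coeff_X_pow_modByMonic_X_pow_add_one N hN (by omega) hi,
    coeff_X_pow_modByMonic_X_pow_add_one N hN (by omega) hj]
  split_ifs <;> omega

end Toep

/-- If `τ : R → R` is the ring homomorphism of `R = ℤ[X]/(X^N+1)` determined by
`X ↦ X^{-1} = -X^(N-1)`, then `Toep (m·τ(m')) = Toep m · (Toep m')ᵀ` for all
`m, m' ∈ R`. -/
theorem stmt9 (N : ℕ) (hN : 0 < N)
    (τ : Rq N →+* Rq N) (hτ : τ (rx N) = -(rx N ^ (N - 1)))
    (m m' : Rq N) :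
    Toep N hN (m * τ m') = Toep N hN m * (Toep N hN m')ᵀ := by
  have hτ_transpose : Toep N hN (τ m') = (Toep N hN m')ᵀ := by
    refine Algebra.leftMulMatrix_algHom_apply_eq_transpose _ AdjoinRoot.adjoinRoot_eq_top
      τ.toIntAlgHom ?_ m'
    change Toep N hN (τ (rx N)) = (Toep N hN (rx N))ᵀ
    rw [hτ, Toep_neg_rx_pow_pred]
  rw [Toep_mul, hτ_transpose]
end

section
/- Let N ≥ 1 be a power of two, R = ℤ[X]/(X^N + 1), and for 0 ≤ t < N let σ_t : R → R be the ring homomorphism determined by X ↦ X^{2t+1}. For each 0 ≤ t < N let u_t be the unique integer with 0 ≤ u_t < 2N and u_t·(2t+1) ≡ 1 (mod 2N). Let m_0, …, m_{N−1} ∈ R with power-basis coordinates m_{i,l} ∈ ℤ. Then Σ_{t=0}^{N−1} σ_t( Σ_{i=0}^{N−1} X^{i·u_t}·m_i ) = N · Σ_{i=0}^{N−1} m_{i,0}·X^i in R. -/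
open Polynomial Finset

/-- Cleartext correctness of the Transpose algorithm (case `j = 0`).
For `N` a power of two, `σ t` the ring homomorphism `X ↦ X^(2t+1)` of
`R = ℤ[X]/(X^N+1)`, `u t` the unique `0 ≤ u_t < 2N` with
`u_t·(2t+1) ≡ 1 (mod 2N)`, and `m 0, …, m (N-1) ∈ R` with power-basis
coordinates `c i l`:
`∑_t σ_t(∑_i X^(i·u_t)·m_i) = N · ∑_i m_{i,0}·X^i`. -/
theorem stmt12 (N : ℕ) (hN1 : 1 ≤ N) (hN : ∃ κ : ℕ, N = 2 ^ κ)
    (σ : ℕ → (Rq N →+* Rq N))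
    (hσ : ∀ t < N, σ t (rx N) = rx N ^ (2 * t + 1))
    (u : ℕ → ℕ)
    (hu : ∀ t < N, u t < 2 * N ∧ u t * (2 * t + 1) ≡ 1 [MOD 2 * N])
    (m : ℕ → Rq N) (c : ℕ → ℕ → ℤ)
    (hm : ∀ i < N, m i = ∑ l ∈ Finset.range N, c i l • rx N ^ l) :
    ∑ t ∈ Finset.range N, σ t (∑ i ∈ Finset.range N, rx N ^ (i * u t) * m i)
      = (N : ℤ) • ∑ i ∈ Finset.range N, c i 0 • rx N ^ i := by
  obtain ⟨κ, hκ⟩ := hN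
  have hcyc : ((X : ℤ[X]) ^ N + 1) = cyclotomic (2 * N) ℤ := by
    have h2 : 2 * N = 2 ^ (κ + 1) := by rw [hκ, pow_succ]; ring
    rw [h2, cyclotomic_prime_pow_eq_geom_sum Nat.prime_two]
    rw [Finset.sum_range_succ, Finset.sum_range_one, pow_zero, pow_one, hκ]
    ring
  have hprime : Prime ((X : ℤ[X]) ^ N + 1) := by
    rw [hcyc]
    exact UniqueFactorizationMonoid.irreducible_iff_prime.mp
      (cyclotomic.irreducible (by positivity))
  haveI : IsDomain (Rq N) := AdjoinRoot.isDomain_of_prime hprime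
  set ω := rx N with hωdef
  have h0 : ω ^ N = -1 := by
    have h := AdjoinRoot.mk_self (f := (X : ℤ[X]) ^ N + 1)
    rw [map_add, map_pow, AdjoinRoot.mk_X, map_one] at h
    exact eq_neg_of_add_eq_zero_left h
  have h2N : ω ^ (2 * N) = 1 := by
    rw [mul_comm, pow_mul, h0]; ring
  have hinj : ∀ k : ℤ, ((k : Rq N) = 0) → k = 0 := by
    intro k hk
    by_contra hk0
    have hCk : (AdjoinRoot.mk ((X : ℤ[X]) ^ N + 1)) (C k) = 0 := by
      rw [eq_intCast (Polynomial.C : ℤ →+* ℤ[X]) k, map_intCast]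
      exact hk
    have hdvd : ((X : ℤ[X]) ^ N + 1) ∣ C k := AdjoinRoot.mk_eq_zero.mp hCk
    have hdeg : ((X : ℤ[X]) ^ N + 1).degree ≤ (C k).degree :=
      Polynomial.degree_le_of_dvd hdvd (by simpa using hk0)
    rw [Polynomial.degree_C hk0] at hdeg
    have : ((X : ℤ[X]) ^ N + 1).degree = N := by
      have : ((X : ℤ[X]) ^ N + 1) = X ^ N + C 1 := by rw [map_one]
      rw [this, Polynomial.degree_X_pow_add_C (by omega)]
    rw [this] at hdeg
    have hN0 : N ≤ 0 := by exact_mod_cast hdeg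
    omega
  haveI : NeZero ((2 * N : ℕ) : Rq N) := by
    constructor
    intro h
    have h' : (((2 * N : ℕ) : ℤ) : Rq N) = 0 := by push_cast at h ⊢; exact_mod_cast h
    have := hinj _ h'
    omega
  have hprim : IsPrimitiveRoot ω (2 * N) := by
    rw [← Polynomial.isRoot_cyclotomic_iff (n := 2 * N)]
    rw [IsRoot, ← map_cyclotomic (2 * N) (Int.castRingHom (Rq N)), ← hcyc, eval_map]
    simp [h0]
  have hne : ∀ l, 0 < l → l < N → ω ^ (2 * l) ≠ 1 := by
    intro l hl hlN h
    have hd := (hprim.pow_eq_one_iff_dvd _).mp h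
    have := Nat.le_of_dvd (by omega) hd
    omega
  have geo : ∀ l < N, ∑ t ∈ Finset.range N, ω ^ (l * (2 * t + 1))
      = if l = 0 then (N : Rq N) else 0 := by
    intro l hl
    rcases Nat.eq_zero_or_pos l with rfl | hlpos
    · simp
    · rw [if_neg hlpos.ne']
      have hsum : ∑ t ∈ Finset.range N, ω ^ (l * (2 * t + 1))
          = ω ^ l * ∑ t ∈ Finset.range N, (ω ^ (2 * l)) ^ t := by
        rw [mul_sum]
        refine sum_congr rfl fun t _ => ?_
        rw [← pow_mul, ← pow_add]
        ring_nf
      rw [hsum]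
      have h2 : (∑ t ∈ Finset.range N, (ω ^ (2 * l)) ^ t) * (ω ^ (2 * l) - 1) = 0 := by
        rw [geom_sum_mul, ← pow_mul]
        have he : 2 * l * N = 2 * N * l := by ring
        rw [he, pow_mul, h2N, one_pow, sub_self]
      rcases mul_eq_zero.mp h2 with h | h
      · rw [h, mul_zero]
      · exact absurd (sub_eq_zero.mp h) (hne l hlpos hl)
  have hmain : ∀ t < N, σ t (∑ i ∈ Finset.range N, ω ^ (i * u t) * m i)
      = ∑ i ∈ Finset.range N, ∑ l ∈ Finset.range N,
          c i l • (ω ^ i * ω ^ (l * (2 * t + 1))) := by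
    intro t ht
    rw [map_sum]
    refine sum_congr rfl fun i hi => ?_
    rw [hm i (mem_range.mp hi), mul_sum, map_sum]
    refine sum_congr rfl fun l hl => ?_
    rw [mul_smul_comm, map_zsmul, map_mul, map_pow, map_pow, hσ t ht, ← pow_mul, ← pow_mul]
    congr 2
    · -- ω ^ ((2*t+1) * (i * u t)) = ω ^ i
      have hmod : (2 * t + 1) * (i * u t) ≡ i [MOD 2 * N] := by
        calc (2 * t + 1) * (i * u t) = i * (u t * (2 * t + 1)) := by ring
          _ ≡ i * 1 [MOD 2 * N] := ((hu t ht).2).mul_left i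
          _ = i := by ring
      have hmod' : ((2 * t + 1) * (i * u t)) % (2 * N) = i % (2 * N) := hmod
      rw [pow_eq_pow_mod ((2 * t + 1) * (i * u t)) h2N, hmod',
        ← pow_eq_pow_mod i h2N]
    · rw [mul_comm]
  calc ∑ t ∈ Finset.range N, σ t (∑ i ∈ Finset.range N, ω ^ (i * u t) * m i)
      = ∑ t ∈ Finset.range N, ∑ i ∈ Finset.range N, ∑ l ∈ Finset.range N,
          c i l • (ω ^ i * ω ^ (l * (2 * t + 1))) :=
        sum_congr rfl fun t ht => hmain t (mem_range.mp ht)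
    _ = ∑ i ∈ Finset.range N, ∑ l ∈ Finset.range N,
          c i l • (ω ^ i * ∑ t ∈ Finset.range N, ω ^ (l * (2 * t + 1))) := by
        rw [Finset.sum_comm]
        refine sum_congr rfl fun i _ => ?_
        rw [Finset.sum_comm]
        refine sum_congr rfl fun l _ => ?_
        rw [← smul_sum, ← mul_sum]
    _ = ∑ i ∈ Finset.range N, ∑ l ∈ Finset.range N,
          c i l • (ω ^ i * (if l = 0 then (N : Rq N) else 0)) := by
        refine sum_congr rfl fun i _ => sum_congr rfl fun l hl => ?_
        rw [geo l (mem_range.mp hl)]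
    _ = ∑ i ∈ Finset.range N, c i 0 • (ω ^ i * (N : Rq N)) := by
        refine sum_congr rfl fun i _ => ?_
        rw [Finset.sum_eq_single_of_mem 0 (mem_range.mpr (by omega))]
        · rw [if_pos rfl]
        · intro l _ hl0
          rw [if_neg hl0, mul_zero, smul_zero]
    _ = (N : ℤ) • ∑ i ∈ Finset.range N, c i 0 • ω ^ i := by
        rw [smul_sum]
        refine sum_congr rfl fun i _ => ?_
        simp only [zsmul_eq_mul, Int.cast_natCast]
        ring
end

section
/- Let N ≥ 1 be a power of two, R = ℤ[X]/(X^N + 1), and let p, q ≥ 1 be integers and n ≥ 1. Let sk, sk'_0, …, sk'_{n−1}, m_0, …, m_{n−1} ∈ R, let α_0, …, α_{n−1} ∈ R, and let B = (B_{j,i}) ∈ R^{n×n} satisfy, for all 0 ≤ j, i < n: B_{j,i} ≡ −α_j·sk'_i + p·sk·δ_{j,i} (mod p·q), where δ_{j,i} is 1 if j = i and 0 otherwise, and congruence modulo an integer r means the difference lies in r·R. Suppose a_0, …, a_{n−1}, b_0, …, b_{n−1} ∈ R satisfy a_i·sk + b_i ≡ m_i (mod q) for all i, and suppose a' ∈ R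 and c_0, …, c_{n−1} ∈ R satisfy p·a' ≡ Σ_{0≤j<n} a_j·α_j (mod p·q) and p·c_i ≡ Σ_{0≤j<n} a_j·B_{j,i} (mod p·q) for all i. Then for every 0 ≤ i < n: a'·sk'_i + (b_i + c_i) ≡ m_i (mod q). -/
/-!
Modulo `p q`, the key relation for `B` gives
`∑ⱼ aⱼ Bⱼᵢ ≡ -(∑ⱼ aⱼ αⱼ) sk'ᵢ + p aᵢ sk`, so
`p (a' sk'ᵢ + cᵢ) ≡ (∑ⱼ aⱼ αⱼ) sk'ᵢ + ∑ⱼ aⱼ Bⱼᵢ ≡ p aᵢ sk`: the `α`-terms cancel and the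
`δ`-term picks out `j = i`. Since `ℤ[X]/(X^N + 1)` is a free `ℤ`-module for `N ≥ 1`, the factor
`p` can be cancelled, giving `a' sk'ᵢ + cᵢ ≡ aᵢ sk (mod q)`; adding `aᵢ sk + bᵢ ≡ mᵢ (mod q)`
finishes the proof.
-/

open Polynomial Finset

lemma Rq.isAddTorsionFree {N : ℕ} (hN : 1 ≤ N) : IsAddTorsionFree (Rq N) :=
  have hmonic : ((X : ℤ[X]) ^ N + 1).Monic := monic_X_pow_add (by simp; omega)
  have := (AdjoinRoot.powerBasis' hmonic).basis.isTorsionFree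
  Module.isTorsionFree_int_iff_isAddTorsionFree.mp this

lemma natCast_dvd_of_natCast_mul_dvd_natCast_mul {R : Type*} [CommRing R] [IsAddTorsionFree R]
    {p q : ℕ} (hp : p ≠ 0) {y : R} (h : ((p * q : ℕ) : R) ∣ p * y) : (q : R) ∣ y := by
  obtain ⟨z, hz⟩ := h
  refine ⟨z, nsmul_right_injective hp ?_⟩
  simp only [nsmul_eq_mul]
  push_cast at hz
  linear_combination hz

section FormatSwitch

variable {R : Type*} [CommRing R] (p sk a' s' c : R) (a α B : ℕ → R) {n i : ℕ}

lemma mul_switched_phase_eq (hi : i < n)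
    (hB : ∀ j < n, B j = -α j * s' + p * sk * (if j = i then 1 else 0))
    (ha' : p * a' = ∑ j ∈ range n, a j * α j) (hc : p * c = ∑ j ∈ range n, a j * B j) :
    p * (a' * s' + c) = p * (a i * sk) := by
  have hsum : ∑ j ∈ range n, a j * B j = -(∑ j ∈ range n, a j * α j) * s' + p * (a i * sk) := by
    rw [sum_congr rfl fun j hj => by rw [hB j (mem_range.mp hj)]]
    simp only [mul_add, mul_ite, mul_one, mul_zero, sum_add_distrib, sum_ite_eq', mem_range, hi,
      if_true, neg_mul, mul_neg, sum_neg_distrib, sum_mul, ← mul_assoc]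
    ring
  rw [mul_add, hc, hsum, ← ha']
  ring

lemma dvd_mul_switched_phase_sub {d : R} (hi : i < n)
    (hB : ∀ j < n, d ∣ B j - (-α j * s' + p * sk * (if j = i then 1 else 0)))
    (ha' : d ∣ p * a' - ∑ j ∈ range n, a j * α j) (hc : d ∣ p * c - ∑ j ∈ range n, a j * B j) :
    d ∣ p * (a' * s' + c - a i * sk) := by
  let π := Ideal.Quotient.mk (Ideal.span {d})
  rw [← Ideal.Quotient.eq_zero_iff_dvd, map_mul, map_sub, mul_sub, sub_eq_zero]
  simp only [← Ideal.Quotient.eq_zero_iff_dvd, map_sub, sub_eq_zero] at hB ha' hc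
  simp only [map_add, map_mul, map_neg, MonoidWithZeroHom.map_ite_one_zero, map_sum] at hB ha' hc ⊢
  exact mul_switched_phase_eq (π p) (π sk) (π a') (π s') (π c) (π ∘ a) (π ∘ α) (π ∘ B) hi hB ha' hc

end FormatSwitch

theorem stmt13_general (N : ℕ) (hN1 : 1 ≤ N)
    (p q n : ℕ) (hp : 1 ≤ p)
    (sk : Rq N) (sk' m a b c α : ℕ → Rq N) (B : ℕ → ℕ → Rq N) (a' : Rq N)
    (hB : ∀ j < n, ∀ i < n,
      ((p * q : ℕ) : Rq N) ∣
        (B j i - (-(α j) * sk' i + (p : Rq N) * sk * (if j = i then 1 else 0))))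
    (henc : ∀ i < n, ((q : ℕ) : Rq N) ∣ (a i * sk + b i - m i))
    (ha' : ((p * q : ℕ) : Rq N) ∣
      ((p : Rq N) * a' - ∑ j ∈ Finset.range n, a j * α j))
    (hc : ∀ i < n, ((p * q : ℕ) : Rq N) ∣
      ((p : Rq N) * c i - ∑ j ∈ Finset.range n, a j * B j i)) :
    ∀ i < n, ((q : ℕ) : Rq N) ∣ (a' * sk' i + (b i + c i) - m i) := by
  intro i hi
  have := Rq.isAddTorsionFree hN1
  have hphase := dvd_mul_switched_phase_sub _ _ _ _ _ _ _ (fun j => B j i) hi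
    (fun j hj => hB j hj i hi) ha' (hc i hi)
  have hswitch := natCast_dvd_of_natCast_mul_dvd_natCast_mul (by omega) hphase
  convert dvd_add hswitch (henc i hi) using 1
  ring

/-- Exact-arithmetic correctness of the shared-`s` to shared-`a` format
conversion (Algorithm 1). Congruence of `x, y ∈ R = ℤ[X]/(X^N+1)` modulo an
integer `r` (meaning `x - y ∈ r·R`) is expressed as `(r : R) ∣ (x - y)`.
If `B j i ≡ -α_j·sk'_i + p·sk·δ_{j,i} (mod pq)` for all `j, i < n`,
`a_i·sk + b_i ≡ m_i (mod q)` for all `i < n`,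
`p·a' ≡ ∑_j a_j·α_j (mod pq)` and `p·c_i ≡ ∑_j a_j·B_{j,i} (mod pq)`,
then `a'·sk'_i + (b_i + c_i) ≡ m_i (mod q)` for all `i < n`. -/
theorem stmt13 (N : ℕ) (hN1 : 1 ≤ N) (hN : ∃ κ : ℕ, N = 2 ^ κ)
    (p q n : ℕ) (hp : 1 ≤ p) (hq : 1 ≤ q) (hn : 1 ≤ n)
    (sk : Rq N) (sk' m a b c α : ℕ → Rq N) (B : ℕ → ℕ → Rq N) (a' : Rq N)
    (hB : ∀ j < n, ∀ i < n,
      ((p * q : ℕ) : Rq N) ∣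
        (B j i - (-(α j) * sk' i + (p : Rq N) * sk * (if j = i then 1 else 0))))
    (henc : ∀ i < n, ((q : ℕ) : Rq N) ∣ (a i * sk + b i - m i))
    (ha' : ((p * q : ℕ) : Rq N) ∣
      ((p : Rq N) * a' - ∑ j ∈ Finset.range n, a j * α j))
    (hc : ∀ i < n, ((p * q : ℕ) : Rq N) ∣
      ((p : Rq N) * c i - ∑ j ∈ Finset.range n, a j * B j i)) :
    ∀ i < n, ((q : ℕ) : Rq N) ∣ (a' * sk' i + (b i + c i) - m i) :=
  stmt13_general N hN1 p q n hp sk sk' m a b c α B a' hB henc ha' hc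
end
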